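/- arXiv:1507.00509 — 2 statements merged into one kernel-verified Lean document; each statement's English description precedes it below -/
import Mathlib

section
/- For any n×n matrix Φ, the induced two-norm satisfies ‖Φ‖₂ ≤ max_{i,j : a_{ij} ≠ 0} √(r_i(Φ)·c_j(Φ)), where r_i(Φ) = Σ_j |a_{ij}| is the i-th row sum and c_j(Φ) = Σ_i |a_{ij}| is the j-th column sum. -/
open scoped BigOperators

/-! Weighted Cauchy–Schwarz with weights `|a i j|` gives
`(∑ j, a i j * x j) ^ 2 ≤ r i * ∑ j, |a i j| * x j ^ 2`; summed over `i`, the coefficient of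
`x j ^ 2` is `∑ i, r i * |a i j|`. With `M` the maximum, `a i j ≠ 0` forces
`r i ≤ M ^ 2 / c j`, so this coefficient is at most `M ^ 2 / c j * c j = M ^ 2`, and hence
`‖Φ x‖ ^ 2 ≤ M ^ 2 ‖x‖ ^ 2`. -/

namespace Matrix

variable {m n : Type*} [Fintype m] [Fintype n]

def absRowSum (A : Matrix m n ℝ) (i : m) : ℝ := ∑ j, |A i j|

def absColSum (A : Matrix m n ℝ) (j : n) : ℝ := ∑ i, |A i j|

lemma sq_sum_mul_le_sum_abs_mul_sum_abs_mul_sq (a x : n → ℝ) :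
    (∑ j, a j * x j) ^ 2 ≤ (∑ j, |a j|) * ∑ j, |a j| * x j ^ 2 :=
  Finset.sum_sq_le_sum_mul_sum_of_sq_le_mul _ (fun _ _ => abs_nonneg _)
    (fun _ _ => by positivity) fun j _ => by
      rw [mul_pow, ← sq_abs (a j)]; exact le_of_eq (by ring)

lemma sum_mulVec_sq_le (A : Matrix m n ℝ) (x : n → ℝ) :
    ∑ i, (A *ᵥ x) i ^ 2 ≤ ∑ j, (∑ i, absRowSum A i * |A i j|) * x j ^ 2 :=
  calc ∑ i, (A *ᵥ x) i ^ 2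
      ≤ ∑ i, absRowSum A i * ∑ j, |A i j| * x j ^ 2 :=
        Finset.sum_le_sum fun i _ => sq_sum_mul_le_sum_abs_mul_sum_abs_mul_sq (A i) x
    _ = ∑ j, (∑ i, absRowSum A i * |A i j|) * x j ^ 2 := by
        simp_rw [Finset.mul_sum, Finset.sum_mul, mul_assoc]
        exact Finset.sum_comm

lemma sum_absRowSum_mul_abs_le {K : ℝ} (A : Matrix m n ℝ) (hK : 0 ≤ K)
    (h : ∀ i j, A i j ≠ 0 → absRowSum A i * absColSum A j ≤ K) (j : n) :
    ∑ i, absRowSum A i * |A i j| ≤ K := by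
  have hc : 0 ≤ absColSum A j := Finset.sum_nonneg fun _ _ => abs_nonneg _
  rcases hc.eq_or_lt with hc | hc
  · have hcol : ∀ i, |A i j| = 0 :=
      fun i => (Finset.sum_eq_zero_iff_of_nonneg fun _ _ => abs_nonneg _).mp hc.symm i
        (Finset.mem_univ i)
    simpa [hcol] using hK
  · refine le_of_mul_le_mul_left ?_ hc
    calc absColSum A j * ∑ i, absRowSum A i * |A i j|
        = ∑ i, absRowSum A i * absColSum A j * |A i j| := by
          rw [Finset.mul_sum]; exact Finset.sum_congr rfl fun _ _ => by ring
      _ ≤ ∑ i, K * |A i j| := Finset.sum_le_sum fun i _ => by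
          rcases eq_or_ne (A i j) 0 with hij | hij
          · simp [hij]
          · exact mul_le_mul_of_nonneg_right (h i j hij) (abs_nonneg _)
      _ = absColSum A j * K := by rw [← Finset.mul_sum, mul_comm]; rfl

lemma norm_toLp_mulVec_le {K : ℝ} (A : Matrix m n ℝ) (hK : 0 ≤ K)
    (h : ∀ i j, A i j ≠ 0 → absRowSum A i * absColSum A j ≤ K ^ 2) (x : EuclideanSpace ℝ n) :
    ‖WithLp.toLp 2 (A *ᵥ x.ofLp)‖ ≤ K * ‖x‖ := by
  refine (pow_le_pow_iff_left₀ (norm_nonneg _) (by positivity) two_ne_zero).mp ?_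
  rw [mul_pow, EuclideanSpace.real_norm_sq_eq, EuclideanSpace.real_norm_sq_eq, Finset.mul_sum]
  calc ∑ i, (A *ᵥ x.ofLp) i ^ 2
      ≤ ∑ j, (∑ i, absRowSum A i * |A i j|) * x j ^ 2 := sum_mulVec_sq_le A x.ofLp
    _ ≤ ∑ j, K ^ 2 * x j ^ 2 := Finset.sum_le_sum fun j _ =>
        mul_le_mul_of_nonneg_right (sum_absRowSum_mul_abs_le A (by positivity) h j) (sq_nonneg _)

lemma norm_toEuclideanCLM_le {K : ℝ} [DecidableEq n] (A : Matrix n n ℝ) (hK : 0 ≤ K)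
    (h : ∀ i j, A i j ≠ 0 → absRowSum A i * absColSum A j ≤ K ^ 2) :
    ‖toEuclideanCLM (𝕜 := ℝ) A‖ ≤ K :=
  ContinuousLinearMap.opNorm_le_bound _ hK (norm_toLp_mulVec_le A hK h)

end Matrix

theorem two_norm_le_max_sqrt_row_col_general (n : ℕ) (Φ : Matrix (Fin n) (Fin n) ℝ) :
    ‖Matrix.toEuclideanCLM (𝕜 := ℝ) Φ‖ ≤
      ⨆ p : {p : Fin n × Fin n // Φ p.1 p.2 ≠ 0},
        Real.sqrt ((∑ j, |Φ p.1.1 j|) * (∑ i, |Φ i p.1.2|)) := by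
  apply Φ.norm_toEuclideanCLM_le (Real.iSup_nonneg fun _ => Real.sqrt_nonneg _)
  intro i j hij
  refine (Real.sqrt_le_iff.mp ?_).2
  exact le_ciSup_of_le (Finite.bddAbove_range _) ⟨(i, j), hij⟩ le_rfl

/-- For a nonzero `n×n` matrix `Φ`, the induced two-norm satisfies
`‖Φ‖₂ ≤ max_{i,j : Φ i j ≠ 0} √(r_i(Φ)·c_j(Φ))`, where `r_i` is the `i`-th row sum of
absolute values and `c_j` the `j`-th column sum. -/
theorem two_norm_le_max_sqrt_row_col (n : ℕ) (Φ : Matrix (Fin n) (Fin n) ℝ) (hΦ : Φ ≠ 0) :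
    ‖Matrix.toEuclideanCLM (𝕜 := ℝ) Φ‖ ≤
      ⨆ p : {p : Fin n × Fin n // Φ p.1 p.2 ≠ 0},
        Real.sqrt ((∑ j, |Φ p.1.1 j|) * (∑ i, |Φ i p.1.2|)) :=
  two_norm_le_max_sqrt_row_col_general n Φ
end

section
/- Refined dimension-dependent Lipschitz bound: under the coordinate-wise Lipschitz assumption |t_j(s̄_j|s) − t_j(s̄_j|s')| ≤ d_{ij}|s_i − s'_i| (s, s' differing only in coordinate i), the value functions W_k of the Bellman recursion over Ā = D₁×…×D_n satisfy, for s, s' ∈ Ā, |W_k(s) − W_k(s')| ≤ Σ_{i=1}^n (Σ_{j=1}^n d_{ij}·L(D_j))·|s_i − s'_i| for all k = 0,…,N. -/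
open MeasureTheory
open scoped BigOperators

/-! A Bellman step maps a function bounded by `1` on the box to
`s ↦ ∫ V · ∏ j, t j (· j) s`, again bounded by `1`, and if `s, s'` differ only in coordinate `i`
the difference of the two integrals is at most `∫ |∏ t_j(·|s) - ∏ t_j(·|s')|`. For
sub-probability densities the total variation of a product is at most the sum of the total
variations of the factors, and the `j`-th of these is at most `d i j * |s i - s' i| * L(D j)`.
Changing one coordinate at a time then gives the bound with the out-weights as constants.

If some `t j (·) s` fails to be integrable, the Lipschitz bound makes it non-integrable for
every `s` in the box; its integral is then the junk value `0`, so the kernel has total mass `0`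
and every `W k` with `k < N` vanishes on the box. -/

theorem abs_prod_sub_prod_le_sum_prod {ι : Type*} [Fintype ι] [LinearOrder ι] (a b : ι → ℝ) :
    |∏ i, a i - ∏ i, b i| ≤
      ∑ i, ∏ l, (if l < i then |a l| else if i < l then |b l| else |a l - b l|) := by
  have hexpand := Finset.prod_add_ordered Finset.univ b (a - b)
  simp only [Pi.sub_apply, add_sub_cancel] at hexpand
  rw [hexpand, add_sub_cancel_left]
  refine (Finset.abs_sum_le_sum_abs _ _).trans (Finset.sum_le_sum fun i _ => le_of_eq ?_)
  have hafter : Finset.univ.filter (fun l => ¬l < i ∧ i < l) = Finset.univ.filter (i < ·) := by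
    ext l; simpa using fun h => le_of_lt h
  have hat : (Finset.univ.filter fun l => ¬l < i).filter (fun l => ¬i < l) = {i} := by
    ext l; simp [le_antisymm_iff, and_comm]
  rw [Finset.prod_ite, Finset.prod_ite, Finset.filter_filter, hafter, hat, Finset.prod_singleton,
    abs_mul, abs_mul, Finset.abs_prod, Finset.abs_prod]
  ring

theorem integral_abs_prod_sub_prod_le {ι : Type*} [Fintype ι] {α : ι → Type*}
    [∀ i, MeasurableSpace (α i)] {μ : ∀ i, Measure (α i)} [∀ i, SigmaFinite (μ i)]
    {f g : ∀ i, α i → ℝ} (hf : ∀ i, Integrable (f i) (μ i)) (hg : ∀ i, Integrable (g i) (μ i))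
    (hf1 : ∀ i, ∫ y, |f i y| ∂μ i ≤ 1) (hg1 : ∀ i, ∫ y, |g i y| ∂μ i ≤ 1) :
    ∫ x, |∏ i, f i (x i) - ∏ i, g i (x i)| ∂Measure.pi μ ≤ ∑ i, ∫ y, |f i y - g i y| ∂μ i := by
  let : LinearOrder ι := LinearOrder.lift' _ (Fintype.equivFin ι).injective
  set G : ι → ∀ l, α l → ℝ := fun i l y =>
    if l < i then |f l y| else if i < l then |g l y| else |f l y - g l y| with hG
  have hGint : ∀ i l, Integrable (G i l) (μ l) := by
    intro i l
    simp only [hG]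
    split_ifs
    exacts [(hf l).abs, (hg l).abs, ((hf l).sub (hg l)).abs]
  have hGle : ∀ i l, ∫ y, G i l y ∂μ l ≤ if l = i then ∫ y, |f i y - g i y| ∂μ i else 1 := by
    intro i l
    rcases lt_trichotomy l i with h | rfl | h
    · simp [hG, h, h.ne, hf1]
    · simp [hG]
    · simp [hG, h, h.ne', not_lt_of_gt h, hg1]
  calc ∫ x, |∏ i, f i (x i) - ∏ i, g i (x i)| ∂Measure.pi μ
      ≤ ∫ x, ∑ i, ∏ l, G i l (x l) ∂Measure.pi μ :=
        integral_mono
          ((Integrable.fintype_prod_dep hf).sub (Integrable.fintype_prod_dep hg)).abs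
          (integrable_finsetSum _ fun i _ => Integrable.fintype_prod_dep (hGint i))
          fun x => abs_prod_sub_prod_le_sum_prod _ _
    _ = ∑ i, ∏ l, ∫ y, G i l y ∂μ l := by
        rw [integral_finsetSum _ fun i _ => Integrable.fintype_prod_dep (hGint i)]
        simp_rw [integral_fintype_prod_eq_prod]
    _ ≤ ∑ i, ∏ l, if l = i then ∫ y, |f i y - g i y| ∂μ i else 1 := by
        refine Finset.sum_le_sum fun i _ => Finset.prod_le_prod (fun l _ => ?_) fun l _ => hGle i l
        exact integral_nonneg fun y => by simp only [hG]; split_ifs <;> exact abs_nonneg _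
    _ = ∑ i, ∫ y, |f i y - g i y| ∂μ i := by simp

theorem abs_sub_le_sum_of_coordinatewise {ι : Type*} [Fintype ι] {D : ι → Set ℝ}
    {F : (ι → ℝ) → ℝ} {c : ι → ℝ}
    (hF : ∀ i, ∀ u ∈ Set.univ.pi D, ∀ v ∈ Set.univ.pi D,
      (∀ k, k ≠ i → u k = v k) → |F u - F v| ≤ c i * |u i - v i|)
    {s s' : ι → ℝ} (hs : s ∈ Set.univ.pi D) (hs' : s' ∈ Set.univ.pi D) :
    |F s - F s'| ≤ ∑ i, c i * |s i - s' i| := by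
  classical
  have hpath : ∀ S : Finset ι, |F s - F (S.piecewise s' s)| ≤ ∑ i ∈ S, c i * |s i - s' i| := by
    intro S
    induction S using Finset.induction_on with
    | empty => simp
    | @insert a S ha ih =>
      have hstep : |F (S.piecewise s' s) - F ((insert a S).piecewise s' s)|
          ≤ c a * |s a - s' a| := by
        have h := hF a _ (S.piecewise_mem_set_pi hs' hs) _
          ((insert a S).piecewise_mem_set_pi hs' hs)
          fun k hk => (Finset.piecewise_insert_of_ne _ _ _ hk).symm
        rwa [Finset.piecewise_eq_of_notMem _ _ _ ha,
          Finset.piecewise_eq_of_mem _ _ _ (Finset.mem_insert_self a S)] at h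
      rw [Finset.sum_insert ha]
      linarith [abs_sub_le (F s) (F (S.piecewise s' s)) (F ((insert a S).piecewise s' s))]
  simpa using hpath Finset.univ

theorem continuousOn_of_abs_sub_le_sum {ι : Type*} [Fintype ι] {A : Set (ι → ℝ)}
    {F : (ι → ℝ) → ℝ} {c : ι → ℝ}
    (hF : ∀ s ∈ A, ∀ s' ∈ A, |F s - F s'| ≤ ∑ i, c i * |s i - s' i|) : ContinuousOn F A := by
  refine (LipschitzOnWith.of_dist_le_mul fun s hs s' hs' => ?_ :
    LipschitzOnWith (∑ i, ‖c i‖₊) F A).continuousOn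
  rw [Real.dist_eq, NNReal.coe_sum, Finset.sum_mul]
  refine (hF s hs s' hs').trans (Finset.sum_le_sum fun i _ => ?_)
  rw [coe_nnnorm, Real.norm_eq_abs, ← Real.dist_eq]
  exact mul_le_mul (le_abs_self _) (dist_le_pi_dist s s' i) dist_nonneg (abs_nonneg _)

theorem MeasureTheory.Integrable.of_abs_sub_le {α : Type*} [MeasurableSpace α] {μ : Measure α}
    [IsFiniteMeasure μ] {f g : α → ℝ} (hf : Integrable f μ) (hg : AEStronglyMeasurable g μ)
    {C : ℝ} (hfg : ∀ᵐ x ∂μ, |f x - g x| ≤ C) : Integrable g μ :=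
  (hf.abs.add (integrable_const C)).mono' hg <| hfg.mono fun x hx => by
    rw [Real.norm_eq_abs, Pi.add_apply, abs_sub_comm] at *
    linarith [abs_sub_abs_le_abs_sub (g x) (f x)]

theorem abs_integral_mul_sub_integral_mul_le {α : Type*} [MeasurableSpace α] {μ : Measure α}
    {V p q : α → ℝ} (hV : AEStronglyMeasurable V μ) (hV1 : ∀ᵐ x ∂μ, |V x| ≤ 1)
    (hp : Integrable p μ) (hq : Integrable q μ) :
    |∫ x, V x * p x ∂μ - ∫ x, V x * q x ∂μ| ≤ ∫ x, |p x - q x| ∂μ := by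
  rw [← integral_sub (hp.bdd_mul hV hV1) (hq.bdd_mul hV hV1), ← Real.norm_eq_abs]
  refine norm_integral_le_of_norm_le (hp.sub hq).abs (hV1.mono fun x hx => ?_)
  rw [← mul_sub, Real.norm_eq_abs, abs_mul]
  exact mul_le_of_le_one_left (abs_nonneg _) hx

section Box

variable {ι : Type*} [Fintype ι] {α : ι → Type*} [∀ i, MeasureSpace (α i)]
  [∀ i, SigmaFinite (volume : Measure (α i))] {𝕜 : Type*} [RCLike 𝕜]

theorem setIntegral_univ_pi_prod (s : ∀ i, Set (α i)) (g : ∀ i, α i → 𝕜) :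
    ∫ x in Set.univ.pi s, ∏ i, g i (x i) = ∏ i, ∫ y in s i, g i y := by
  rw [volume_pi, Measure.restrict_pi_pi, integral_fintype_prod_eq_prod]

theorem integrableOn_univ_pi_prod {s : ∀ i, Set (α i)} {g : ∀ i, α i → 𝕜}
    (hg : ∀ i, IntegrableOn (g i) (s i)) :
    IntegrableOn (fun x => ∏ i, g i (x i)) (Set.univ.pi s) := by
  rw [IntegrableOn, volume_pi, Measure.restrict_pi_pi]
  exact Integrable.fintype_prod_dep hg

end Box

section ProductKernel

variable {ι : Type*} [Fintype ι] {D : ι → Set ℝ}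

theorem abs_setIntegral_mul_prod_le_one (hD : ∀ j, MeasurableSet (D j)) {f : ι → ℝ → ℝ}
    (hf0 : ∀ j x, 0 ≤ f j x) (hf : ∀ j, IntegrableOn (f j) (D j))
    (hf1 : ∀ j, ∫ x in D j, f j x ≤ 1) {V : (ι → ℝ) → ℝ} (hV1 : ∀ x ∈ Set.univ.pi D, |V x| ≤ 1) :
    |∫ x in Set.univ.pi D, V x * ∏ j, f j (x j)| ≤ 1 := by
  have hprod0 : ∀ x : ι → ℝ, 0 ≤ ∏ j, f j (x j) := fun x =>
    Finset.prod_nonneg fun j _ => hf0 j _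
  calc |∫ x in Set.univ.pi D, V x * ∏ j, f j (x j)|
      ≤ ∫ x in Set.univ.pi D, ∏ j, f j (x j) := by
        rw [← Real.norm_eq_abs]
        refine norm_integral_le_of_norm_le (integrableOn_univ_pi_prod hf)
          (ae_restrict_of_forall_mem (.univ_pi hD) fun x hx => ?_)
        rw [Real.norm_eq_abs, abs_mul, abs_of_nonneg (hprod0 x)]
        exact mul_le_of_le_one_left (hprod0 x) (hV1 x hx)
    _ = ∏ j, ∫ y in D j, f j y := setIntegral_univ_pi_prod D f
    _ ≤ 1 := Finset.prod_le_one (fun j _ => setIntegral_nonneg (hD j) fun x _ => hf0 j x)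
        fun j _ => hf1 j

theorem abs_setIntegral_mul_prod_sub_le (hD : ∀ j, MeasurableSet (D j)) {f g : ι → ℝ → ℝ}
    (hf0 : ∀ j x, 0 ≤ f j x) (hg0 : ∀ j x, 0 ≤ g j x)
    (hf : ∀ j, IntegrableOn (f j) (D j)) (hg : ∀ j, IntegrableOn (g j) (D j))
    (hf1 : ∀ j, ∫ x in D j, f j x ≤ 1) (hg1 : ∀ j, ∫ x in D j, g j x ≤ 1)
    {V : (ι → ℝ) → ℝ} (hV : AEStronglyMeasurable V (volume.restrict (Set.univ.pi D)))
    (hV1 : ∀ x ∈ Set.univ.pi D, |V x| ≤ 1) :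
    |(∫ x in Set.univ.pi D, V x * ∏ j, f j (x j)) - ∫ x in Set.univ.pi D, V x * ∏ j, g j (x j)|
      ≤ ∑ j, ∫ y in D j, |f j y - g j y| := by
  refine (abs_integral_mul_sub_integral_mul_le hV (ae_restrict_of_forall_mem (.univ_pi hD) hV1)
    (integrableOn_univ_pi_prod hf) (integrableOn_univ_pi_prod hg)).trans ?_
  rw [volume_pi, Measure.restrict_pi_pi]
  exact integral_abs_prod_sub_prod_le hf hg (by simpa only [abs_of_nonneg (hf0 _ _)] using hf1)
    (by simpa only [abs_of_nonneg (hg0 _ _)] using hg1)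

end ProductKernel

noncomputable def outWeight {ι : Type*} [Fintype ι] (d : ι → ι → ℝ) (D : ι → Set ℝ) (i : ι) :
    ℝ :=
  ∑ j, d i j * (volume (D j)).toReal

theorem outWeight_nonneg {ι : Type*} [Fintype ι] {d : ι → ι → ℝ} (D : ι → Set ℝ) {i : ι}
    (hd : ∀ j, 0 ≤ d i j) : 0 ≤ outWeight d D i :=
  Finset.sum_nonneg fun j _ => mul_nonneg (hd j) ENNReal.toReal_nonneg

section ValueIteration

variable {ι : Type*} [Fintype ι] {D : ι → Set ℝ} {t : ι → ℝ → (ι → ℝ) → ℝ} {d : ι → ι → ℝ}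
  {N : ℕ} {W : ℕ → (ι → ℝ) → ℝ}

theorem value_functions_bounded_and_lipschitz (hD : ∀ j, MeasurableSet (D j))
    (hDb : ∀ j, Bornology.IsBounded (D j)) (ht0 : ∀ j x s, 0 ≤ t j x s)
    (hInt : ∀ j, ∀ s ∈ Set.univ.pi D, IntegrableOn (fun x => t j x s) (D j))
    (htsub : ∀ j, ∀ s ∈ Set.univ.pi D, ∫ x in D j, t j x s ≤ 1) (hd : ∀ i j, 0 ≤ d i j)
    (hLip : ∀ i j, ∀ x ∈ D j, ∀ s ∈ Set.univ.pi D, ∀ s' ∈ Set.univ.pi D,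
      (∀ k, k ≠ i → s k = s' k) → |t j x s - t j x s'| ≤ d i j * |s i - s' i|)
    (hWN : ∀ s ∈ Set.univ.pi D, W N s = 1)
    (hW : ∀ k < N, ∀ s ∈ Set.univ.pi D,
      W k s = ∫ sb in Set.univ.pi D, W (k + 1) sb * ∏ j, t j (sb j) s)
    {k : ℕ} (hk : k ≤ N) :
    (∀ s ∈ Set.univ.pi D, |W k s| ≤ 1) ∧ ∀ s ∈ Set.univ.pi D, ∀ s' ∈ Set.univ.pi D,
      |W k s - W k s'| ≤ ∑ i, outWeight d D i * |s i - s' i| := by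
  induction hk using Nat.decreasingInduction with
  | self =>
    refine ⟨fun s hs => by simp [hWN s hs], fun s hs s' hs' => ?_⟩
    rw [hWN s hs, hWN s' hs', sub_self, abs_zero]
    exact Finset.sum_nonneg fun i _ => mul_nonneg (outWeight_nonneg D (hd i)) (abs_nonneg _)
  | of_succ k hk ih =>
    obtain ⟨hbound, hlip⟩ := ih
    have hmeas : AEStronglyMeasurable (W (k + 1)) (volume.restrict (Set.univ.pi D)) :=
      (continuousOn_of_abs_sub_le_sum hlip).aestronglyMeasurable (.univ_pi hD)
    refine ⟨fun s hs => ?_, fun s hs s' hs' =>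
      abs_sub_le_sum_of_coordinatewise (fun i u hu v hv huv => ?_) hs hs'⟩
    · rw [hW k hk s hs]
      exact abs_setIntegral_mul_prod_le_one hD (fun j x => ht0 j x s) (fun j => hInt j s hs)
        (fun j => htsub j s hs) hbound
    · rw [hW k hk u hu, hW k hk v hv, outWeight, Finset.sum_mul]
      refine (abs_setIntegral_mul_prod_sub_le hD (fun j x => ht0 j x u) (fun j x => ht0 j x v)
        (fun j => hInt j u hu) (fun j => hInt j v hv) (fun j => htsub j u hu)
        (fun j => htsub j v hv) hmeas hbound).trans (Finset.sum_le_sum fun j _ => ?_)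
      calc ∫ y in D j, |t j y u - t j y v|
          ≤ d i j * |u i - v i| * volume.real (D j) := by
            rw [← abs_of_nonneg (setIntegral_nonneg (hD j) fun y _ => abs_nonneg _),
              ← Real.norm_eq_abs]
            exact norm_setIntegral_le_of_norm_le_const (hDb j).measure_lt_top fun x hx =>
              (abs_abs _).trans_le (hLip i j x hx u hu v hv huv)
        _ = d i j * (volume (D j)).toReal * |u i - v i| := by rw [measureReal_def]; ring

theorem value_functions_const_of_not_integrableOn (hD : ∀ j, MeasurableSet (D j))
    (hDb : ∀ j, Bornology.IsBounded (D j)) (htm : ∀ j s, Measurable (fun x => t j x s))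
    (hLip : ∀ i j, ∀ x ∈ D j, ∀ s ∈ Set.univ.pi D, ∀ s' ∈ Set.univ.pi D,
      (∀ k, k ≠ i → s k = s' k) → |t j x s - t j x s'| ≤ d i j * |s i - s' i|)
    {j₀ : ι} {s₀ : ι → ℝ} (hs₀ : s₀ ∈ Set.univ.pi D)
    (hnot : ¬ IntegrableOn (fun x => t j₀ x s₀) (D j₀))
    (hWN : ∀ s ∈ Set.univ.pi D, W N s = 1)
    (hW : ∀ k < N, ∀ s ∈ Set.univ.pi D,
      W k s = ∫ sb in Set.univ.pi D, W (k + 1) sb * ∏ j, t j (sb j) s)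
    {k : ℕ} (hk : k ≤ N) :
    ∃ c, ∀ s ∈ Set.univ.pi D, W k s = c := by
  have : IsFiniteMeasure (volume.restrict (D j₀)) :=
    isFiniteMeasure_restrict.2 (hDb j₀).measure_lt_top.ne
  have hnot' : ∀ s ∈ Set.univ.pi D, ¬ IntegrableOn (fun x => t j₀ x s) (D j₀) :=
    fun s hs hint => hnot <| Integrable.of_abs_sub_le hint (htm j₀ s₀).aestronglyMeasurable <|
      ae_restrict_of_forall_mem (hD j₀) fun x hx =>
        abs_sub_le_sum_of_coordinatewise (F := fun s => t j₀ x s)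
          (fun i u hu v hv huv => hLip i j₀ x hx u hu v hv huv) hs hs₀
  have hmass : ∀ s ∈ Set.univ.pi D, ∫ sb in Set.univ.pi D, ∏ j, t j (sb j) s = 0 := by
    intro s hs
    rw [setIntegral_univ_pi_prod D fun j x => t j x s]
    exact Finset.prod_eq_zero (Finset.mem_univ j₀) (integral_undef (hnot' s hs))
  induction hk using Nat.decreasingInduction with
  | self => exact ⟨1, hWN⟩
  | of_succ k hk ih =>
    obtain ⟨c, hc⟩ := ih
    refine ⟨0, fun s hs => ?_⟩
    rw [hW k hk s hs, setIntegral_congr_fun (.univ_pi hD) fun sb hsb => by rw [hc sb hsb],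
      integral_const_mul, hmass s hs, mul_zero]

end ValueIteration

/-- Refined dimension-dependent Lipschitz bound for the invariance value functions:
under the coordinate-wise Lipschitz assumption with constants `d i j`, over the
rectangle `A' = D₁×…×D_n`,
`|W_k(s) − W_k(s')| ≤ Σ_i (Σ_j d i j · L(D j)) · |s_i − s'_i|`. -/
theorem invariance_value_functions_coordinatewise_lipschitz
    (n N : ℕ) (D : Fin n → Set ℝ) (hD : ∀ j, MeasurableSet (D j))
    (hDb : ∀ j, Bornology.IsBounded (D j))
    (t : Fin n → ℝ → (Fin n → ℝ) → ℝ)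
    (ht0 : ∀ j x s, 0 ≤ t j x s)
    (htm : ∀ j s, Measurable (fun x => t j x s))
    (htsub : ∀ j, ∀ s ∈ Set.univ.pi D, ∫ x in D j, t j x s ≤ 1)
    (d : Fin n → Fin n → ℝ) (hd : ∀ i j, 0 ≤ d i j)
    (hLip : ∀ i j, ∀ x ∈ D j, ∀ s ∈ Set.univ.pi D, ∀ s' ∈ Set.univ.pi D,
      (∀ k, k ≠ i → s k = s' k) → |t j x s - t j x s'| ≤ d i j * |s i - s' i|)
    (W : ℕ → (Fin n → ℝ) → ℝ)
    (hWN : ∀ s ∈ Set.univ.pi D, W N s = 1)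
    (hW : ∀ k < N, ∀ s ∈ Set.univ.pi D,
      W k s = ∫ sb in Set.univ.pi D, W (k + 1) sb * ∏ j, t j (sb j) s) :
    ∀ k ≤ N, ∀ s ∈ Set.univ.pi D, ∀ s' ∈ Set.univ.pi D,
      |W k s - W k s'| ≤ ∑ i, (∑ j, d i j * (volume (D j)).toReal) * |s i - s' i| := by
  intro k hk s hs s' hs'
  by_cases hInt : ∀ j, ∀ s ∈ Set.univ.pi D, IntegrableOn (fun x => t j x s) (D j)
  · exact (value_functions_bounded_and_lipschitz hD hDb ht0 hInt htsub hd hLip hWN hW hk).2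
      s hs s' hs'
  · push Not at hInt
    obtain ⟨j₀, s₀, hs₀, hnot⟩ := hInt
    obtain ⟨c, hc⟩ := value_functions_const_of_not_integrableOn hD hDb htm hLip hs₀ hnot hWN hW hk
    rw [hc s hs, hc s' hs', sub_self, abs_zero]
    exact Finset.sum_nonneg fun i _ => mul_nonneg (outWeight_nonneg D (hd i)) (abs_nonneg _)
end
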